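/- With the notation of the entropy decomposition and N_{x,j} ~ Bin(N_j, p(x)), H(p) − E[Ĥ*] ≤ Σ_{j=1}^T Σ_{x∈[k]} p_A(I_j|x)/N_j, where E[Ĥ*] = Σ_j p_A(I_j)·Σ_x p_A(x|I_j)·E[log(N_j/(N_{x,j}+1))]. -/

import Mathlib

/-!
Weighting the entropy by `∑ j, p_A(I_j | x) = 1` and clearing the normalisation `p_A(I_j)`, the
bias splits into the terms `p(x) p_A(I_j | x) (-log p(x) - E[log (N_j / (X + 1))])` with
`X ~ Bin(N_j, p(x))`. Each bracket is `E[log ((X + 1) / (N_j p(x)))]`, which by Jensen is at most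
`log E[(X + 1) / (N_j p(x))] = log (1 + 1 / (N_j p(x))) ≤ 1 / (N_j p(x))`.
-/

open Finset

/-- pmf of Bin(m,r) at i -/
noncomputable def binomPMF (m : ℕ) (r : ℝ) (i : ℕ) : ℝ :=
  (m.choose i : ℝ) * r ^ i * (1 - r) ^ (m - i)

/-- expectation of f(X) for X ~ Bin(m,r) -/
noncomputable def binomExp (m : ℕ) (r : ℝ) (f : ℕ → ℝ) : ℝ :=
  ∑ i ∈ Finset.range (m + 1), binomPMF m r i * f i

open Real

lemma binomPMF_eq_eval_bernsteinPolynomial (m : ℕ) (r : ℝ) (i : ℕ) :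
    binomPMF m r i = (bernsteinPolynomial ℝ m i).eval r := by
  simp [binomPMF, bernsteinPolynomial]

lemma binomPMF_nonneg {m : ℕ} {r : ℝ} (hr0 : 0 ≤ r) (hr1 : r ≤ 1) (i : ℕ) :
    0 ≤ binomPMF m r i := by
  have : 0 ≤ 1 - r := sub_nonneg.2 hr1
  unfold binomPMF
  positivity

lemma sum_binomPMF (m : ℕ) (r : ℝ) : ∑ i ∈ range (m + 1), binomPMF m r i = 1 := by
  simp_rw [binomPMF_eq_eval_bernsteinPolynomial, ← Polynomial.eval_finsetSum,
    bernsteinPolynomial.sum, Polynomial.eval_one]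

lemma sum_binomPMF_mul_natCast (m : ℕ) (r : ℝ) :
    ∑ i ∈ range (m + 1), binomPMF m r i * i = m * r := by
  have h := congrArg (Polynomial.eval r) (bernsteinPolynomial.sum_smul (R := ℝ) m)
  simpa [Polynomial.eval_finsetSum, binomPMF_eq_eval_bernsteinPolynomial, mul_comm] using h

lemma binomExp_add_one (m : ℕ) (r : ℝ) : binomExp m r (fun i => (i : ℝ) + 1) = m * r + 1 := by
  simp only [binomExp, mul_add_one, sum_add_distrib, sum_binomPMF_mul_natCast, sum_binomPMF]

lemma binomExp_const_sub (m : ℕ) (r c : ℝ) (f : ℕ → ℝ) :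
    binomExp m r (fun i => c - f i) = c - binomExp m r f := by
  simp only [binomExp, mul_sub, sum_sub_distrib, ← sum_mul, sum_binomPMF, one_mul]

lemma binomExp_div_const (m : ℕ) (r c : ℝ) (f : ℕ → ℝ) :
    binomExp m r (fun i => f i / c) = binomExp m r f / c := by
  simp only [binomExp, mul_div_assoc', sum_div]

lemma binomExp_log_le_log_binomExp {m : ℕ} {r : ℝ} (hr0 : 0 ≤ r) (hr1 : r ≤ 1)
    {g : ℕ → ℝ} (hg : ∀ i ≤ m, 0 < g i) :
    binomExp m r (fun i => log (g i)) ≤ log (binomExp m r g) :=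
  strictConcaveOn_log_Ioi.concaveOn.le_map_sum (fun i _ => binomPMF_nonneg hr0 hr1 i)
    (sum_binomPMF m r) (fun i hi => hg i (Nat.lt_succ_iff.1 (mem_range.1 hi)))

lemma neg_log_sub_binomExp_log_le {m : ℕ} (hm : 0 < m) {r : ℝ} (hr0 : 0 < r) (hr1 : r ≤ 1) :
    -log r - binomExp m r (fun i => log (m / ((i : ℝ) + 1))) ≤ 1 / (m * r) := by
  have hmr : 0 < (m : ℝ) * r := by positivity
  calc -log r - binomExp m r (fun i => log (m / ((i : ℝ) + 1)))
      = binomExp m r (fun i => log (((i : ℝ) + 1) / (m * r))) := by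
        rw [← binomExp_const_sub]
        congr 1
        funext i
        rw [log_div (by positivity) hmr.ne', log_div (by positivity) (by positivity),
          log_mul (by positivity) hr0.ne']
        ring
    _ ≤ log (binomExp m r (fun i => ((i : ℝ) + 1) / (m * r))) :=
        binomExp_log_le_log_binomExp hr0.le hr1 fun i _ => by positivity
    _ = log (1 + 1 / (m * r)) := by
        rw [binomExp_div_const, binomExp_add_one, add_div, div_self hmr.ne']
    _ ≤ 1 / (m * r) := by
        linarith [log_le_sub_one_of_pos (show 0 < 1 + 1 / ((m : ℝ) * r) by positivity)]

lemma sum_mul_sum_div_sum_mul {ι : Type*} (s : Finset ι) {w : ι → ℝ}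
    (hw : ∀ x ∈ s, 0 ≤ w x) (e : ι → ℝ) :
    (∑ x ∈ s, w x) * ∑ x ∈ s, w x / (∑ y ∈ s, w y) * e x = ∑ x ∈ s, w x * e x := by
  rcases eq_or_ne (∑ y ∈ s, w y) 0 with hzero | hne
  · rw [hzero, zero_mul]
    refine (sum_eq_zero fun x hx => ?_).symm
    rw [(sum_eq_zero_iff_of_nonneg hw).1 hzero x hx, zero_mul]
  · rw [mul_sum]
    refine sum_congr rfl fun x _ => ?_
    field_simp

/-- The bias of the unclipped interval-based estimator:
`H(p) − E[Ĥ*] ≤ ∑ j ∑ x p_A(I_j | x) / N_j`. -/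
theorem unclipped_bias_upper (k T : ℕ) (p : Fin k → ℝ)
    (hpos : ∀ x, 0 < p x) (hsum : ∑ x, p x = 1)
    (A : Fin k → Fin T → ℝ) (hA0 : ∀ x j, 0 ≤ A x j) (hA1 : ∀ x, ∑ j, A x j = 1)
    (N : Fin T → ℕ) (hN : ∀ j, 0 < N j) :
    (-∑ x, p x * Real.log (p x)) -
      (∑ j, (∑ x, p x * A x j) *
        (∑ x, (p x * A x j / (∑ y, p y * A y j)) *
          binomExp (N j) (p x) (fun i => Real.log ((N j : ℝ) / ((i : ℝ) + 1))))) ≤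
    ∑ j, ∑ x, A x j / (N j : ℝ) := by
  have hp1 : ∀ x, p x ≤ 1 := fun x =>
    hsum ▸ single_le_sum (fun y _ => (hpos y).le) (mem_univ x)
  have hentropy : -∑ x, p x * log (p x) = ∑ j, ∑ x, p x * A x j * -log (p x) := by
    simp only [sum_comm (γ := Fin T), mul_right_comm (p _) (A _ _), ← mul_sum, hA1,
      mul_one, ← sum_neg_distrib, mul_neg]
  rw [hentropy, ← sum_sub_distrib]
  refine sum_le_sum fun j _ => ?_
  rw [sum_mul_sum_div_sum_mul _ (fun x _ => mul_nonneg (hpos x).le (hA0 x j)), ← sum_sub_distrib]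
  refine sum_le_sum fun x _ => ?_
  rw [← mul_sub]
  calc _ ≤ p x * A x j * (1 / (N j * p x)) :=
        mul_le_mul_of_nonneg_left (neg_log_sub_binomExp_log_le (hN j) (hpos x) (hp1 x))
          (mul_nonneg (hpos x).le (hA0 x j))
    _ = A x j / N j := by
        have hpx := (hpos x).ne'
        field_simp
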